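/- arXiv:1906.07465 — 3 statements merged into one kernel-verified Lean document; each statement's English description precedes it below -/
import Mathlib

section
/- Let (u, p) be a steady Euler flow on an open set of ℝ³ with u·∇p = 0, and let ω = Ω∘p for a C¹ function Ω : ℝ → ℝ, and let P satisfy ∇P = ω²∇p. Then ũ = ω·u and P also satisfy the steady Euler equation (ũ·∇)ũ = −∇P. -/
noncomputable section

/-- ℝ³ as functions `Fin 3 → ℝ`. -/
abbrev V3 : Type := Fin 3 → ℝ

/-- Partial derivative `∂ᵢ f` at `x`. -/
def pd (i : Fin 3) (f : V3 → ℝ) (x : V3) : ℝ := fderiv ℝ f x (Pi.single i 1)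

/-- Gradient. -/
def grad3 (f : V3 → ℝ) (x : V3) : V3 := fun i => pd i f x

/-- Divergence. -/
def div3 (u : V3 → V3) (x : V3) : ℝ := ∑ i, pd i (fun y => u y i) x

/-- Curl. -/
def curl3 (u : V3 → V3) (x : V3) : V3 :=
  ![pd 1 (fun y => u y 2) x - pd 2 (fun y => u y 1) x,
    pd 2 (fun y => u y 0) x - pd 0 (fun y => u y 2) x,
    pd 0 (fun y => u y 1) x - pd 1 (fun y => u y 0) x]

/-- Cross product on ℝ³. -/
def cross3 (a b : V3) : V3 :=
  ![a 1 * b 2 - a 2 * b 1, a 2 * b 0 - a 0 * b 2, a 0 * b 1 - a 1 * b 0]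

/-- Convective derivative `(u·∇)v`. -/
def conv3 (u v : V3 → V3) (x : V3) : V3 :=
  fun i => ∑ j, u x j * pd j (fun y => v y i) x

/-- Squared norm `|u|²` of a vector field. -/
def nsq (u : V3 → V3) (x : V3) : ℝ := ∑ i, u x i ^ 2

/-- Directional derivative `u·∇f`. -/
def dirDeriv (u : V3 → V3) (f : V3 → ℝ) (x : V3) : ℝ := ∑ i, u x i * pd i f x

/-! By the product rule, `((ωu)·∇)(ωu) = ω² (u·∇)u + ω (u·∇ω) u`. Since `ω = Ω ∘ p`, the chain
rule gives `u·∇ω = Ω'(p) (u·∇p) = 0`, so the right side is `-ω² ∇p = -∇P`. -/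

open Finset

theorem pd_mul {f g : V3 → ℝ} {x : V3} (hf : DifferentiableAt ℝ f x)
    (hg : DifferentiableAt ℝ g x) (j : Fin 3) :
    pd j (fun y => f y * g y) x = f x * pd j g x + g x * pd j f x := by
  simp [pd, fderiv_fun_mul hf hg]

theorem pd_comp {Ω : ℝ → ℝ} {p : V3 → ℝ} {x : V3} (hΩ : DifferentiableAt ℝ Ω (p x))
    (hp : DifferentiableAt ℝ p x) (j : Fin 3) :
    pd j (fun y => Ω (p y)) x = deriv Ω (p x) * pd j p x := by
  have hderiv := (hΩ.hasDerivAt.comp_hasFDerivAt x hp.hasFDerivAt).fderiv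
  rw [Function.comp_def] at hderiv
  simp [pd, hderiv]

theorem dirDeriv_comp (u : V3 → V3) {Ω : ℝ → ℝ} {p : V3 → ℝ} {x : V3}
    (hΩ : DifferentiableAt ℝ Ω (p x)) (hp : DifferentiableAt ℝ p x) :
    dirDeriv u (fun y => Ω (p y)) x = deriv Ω (p x) * dirDeriv u p x := by
  simp only [dirDeriv, pd_comp hΩ hp, mul_sum]
  exact sum_congr rfl fun _ _ => by ring

theorem conv3_smul_left (ω : V3 → ℝ) (u v : V3 → V3) (x : V3) :
    conv3 (fun y => ω y • u y) v x = ω x • conv3 u v x := by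
  ext i
  simp only [conv3, Pi.smul_apply, smul_eq_mul, mul_sum, mul_assoc]

theorem conv3_smul_right (u v : V3 → V3) {ω : V3 → ℝ} {x : V3}
    (hω : DifferentiableAt ℝ ω x) (hv : DifferentiableAt ℝ v x) :
    conv3 u (fun y => ω y • v y) x = ω x • conv3 u v x + dirDeriv u ω x • v x := by
  ext i
  have hvi : DifferentiableAt ℝ (fun y => v y i) x := differentiableAt_pi.mp hv i
  simp only [conv3, dirDeriv, Pi.add_apply, Pi.smul_apply, smul_eq_mul, pd_mul hω hvi,
    mul_sum, sum_mul, ← sum_add_distrib]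
  exact sum_congr rfl fun _ _ => by ring

theorem euler_modification_general (U : Set V3) (hU : IsOpen U)
    (u : V3 → V3) (p : V3 → ℝ)
    (hu : ContDiffOn ℝ 1 u U) (hp : ContDiffOn ℝ 1 p U)
    (euler : ∀ x ∈ U, conv3 u u x = -grad3 p x)
    (hloc : ∀ x ∈ U, dirDeriv u p x = 0)
    (Ω : ℝ → ℝ) (hΩ : ContDiff ℝ 1 Ω)
    (ω : V3 → ℝ) (hω : ∀ x, ω x = Ω (p x))
    (P : V3 → ℝ)
    (hgradP : ∀ x ∈ U, grad3 P x = (ω x)^2 • grad3 p x) :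
    ∀ x ∈ U, conv3 (fun y => ω y • u y) (fun y => ω y • u y) x = -grad3 P x := by
  intro x hx
  have hω_eq : ω = fun y => Ω (p y) := funext hω
  have hux : DifferentiableAt ℝ u x :=
    (hu.contDiffAt (hU.mem_nhds hx)).differentiableAt one_ne_zero
  have hpx : DifferentiableAt ℝ p x :=
    (hp.contDiffAt (hU.mem_nhds hx)).differentiableAt one_ne_zero
  have hΩx : DifferentiableAt ℝ Ω (p x) := hΩ.differentiable one_ne_zero (p x)
  have hωx : DifferentiableAt ℝ ω x := hω_eq ▸ hΩx.comp x hpx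
  have hu_ω : dirDeriv u ω x = 0 := by
    rw [hω_eq, dirDeriv_comp u hΩx hpx, hloc x hx, mul_zero]
  rw [conv3_smul_left, conv3_smul_right u u hωx hux, hu_ω, euler x hx, hgradP x hx,
    zero_smul, add_zero, smul_neg, smul_neg, smul_smul, sq]

/-- Modification of a localizable steady Euler flow: if `u·∇p = 0`, `ω = Ω∘p`
and `∇P = ω²∇p`, then `(ωu, P)` is again a steady Euler flow. -/
theorem euler_modification (U : Set V3) (hU : IsOpen U)
    (u : V3 → V3) (p : V3 → ℝ)
    (hu : ContDiffOn ℝ 1 u U) (hp : ContDiffOn ℝ 1 p U)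
    (euler : ∀ x ∈ U, conv3 u u x = -grad3 p x)
    (hloc : ∀ x ∈ U, dirDeriv u p x = 0)
    (Ω : ℝ → ℝ) (hΩ : ContDiff ℝ 1 Ω)
    (ω : V3 → ℝ) (hω : ∀ x, ω x = Ω (p x))
    (P : V3 → ℝ) (hP : ContDiffOn ℝ 1 P U)
    (hgradP : ∀ x ∈ U, grad3 P x = (ω x)^2 • grad3 p x) :
    ∀ x ∈ U, conv3 (fun y => ω y • u y) (fun y => ω y • u y) x = -grad3 P x :=
  euler_modification_general U hU u p hu hp euler hloc Ω hΩ ω hω P hgradP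
end
end

section
/- The helically symmetric vector field u defined in cylindrical coordinates by u = (1/x)(∂t/∂y) e_ρ + (x²+k²)⁻¹(kh − x ∂t/∂x) e_z + (x²+k²)⁻¹(xh + k ∂t/∂x) e_φ, where x = ρ, y = z − kφ, and h = h(t), is divergence-free. -/
noncomputable section

/-- ℝ² as functions `Fin 2 → ℝ`. -/
abbrev V2 : Type := Fin 2 → ℝ

/-- Partial derivative on ℝ². -/
def pd2 (i : Fin 2) (f : V2 → ℝ) (x : V2) : ℝ := fderiv ℝ f x (Pi.single i 1)

/-! On functions of the helical coordinates `x = ρ`, `y = z - kφ` one has `∂φ = -k ∂y` and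
`∂z = ∂y`, so the divergence becomes a planar expression in `(x, y)`. Its radial part is
`x⁻¹ ∂x (x u_ρ) = x⁻¹ t_yx`. Its remaining part is `x⁻¹ ∂y (x u_z - k u_φ)`, and in
`x u_z - k u_φ = -t_x` the terms in `h` cancel before anything is differentiated, leaving
`-x⁻¹ t_xy`. Symmetry of second derivatives of `t` finishes the proof. -/

open Topology

open ContinuousLinearMap in
def helicalCoord (k : ℝ) : V3 →L[ℝ] V2 := pi ![proj 0, proj 2 - k • proj 1]

@[simp]
lemma helicalCoord_apply (k : ℝ) (p : V3) : helicalCoord k p = ![p 0, p 2 - k * p 1] := by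
  ext i; fin_cases i <;> simp [helicalCoord]

section HelicalCoord

variable (k : ℝ) {g : V2 → ℝ} {p : V3}

lemma pd_comp_helicalCoord (hg : DifferentiableAt ℝ g (helicalCoord k p)) (i : Fin 3) :
    pd i (g ∘ helicalCoord k) p =
      fderiv ℝ g (helicalCoord k p) (helicalCoord k (Pi.single i 1)) := by
  rw [pd, fderiv_comp p hg (helicalCoord k).differentiableAt, ContinuousLinearMap.fderiv]
  rfl

lemma pd_zero_comp_helicalCoord (hg : DifferentiableAt ℝ g (helicalCoord k p)) :
    pd 0 (g ∘ helicalCoord k) p = pd2 0 g (helicalCoord k p) := by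
  rw [pd_comp_helicalCoord k hg, pd2]
  congr 1
  ext i; fin_cases i <;> simp

lemma pd_one_comp_helicalCoord (hg : DifferentiableAt ℝ g (helicalCoord k p)) :
    pd 1 (g ∘ helicalCoord k) p = -k * pd2 1 g (helicalCoord k p) := by
  rw [pd_comp_helicalCoord k hg, pd2, ← smul_eq_mul, ← map_smul]
  congr 1
  ext i; fin_cases i <;> simp

lemma pd_two_comp_helicalCoord (hg : DifferentiableAt ℝ g (helicalCoord k p)) :
    pd 2 (g ∘ helicalCoord k) p = pd2 1 g (helicalCoord k p) := by
  rw [pd_comp_helicalCoord k hg, pd2]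
  congr 1
  ext i; fin_cases i <;> simp

end HelicalCoord

section Planar

variable {f g : V2 → ℝ} {q : V2}

lemma ContDiff.pd2 {n : WithTop ℕ∞} (hf : ContDiff ℝ (n + 1) f) (i : Fin 2) :
    ContDiff ℝ n (pd2 i f) :=
  (hf.fderiv_right le_rfl).clm_apply contDiff_const

lemma pd2_pd2_comm (hf : ContDiff ℝ 2 f) (i j : Fin 2) (q : V2) :
    pd2 i (pd2 j f) q = pd2 j (pd2 i f) q := by
  have hd : Differentiable ℝ (fderiv ℝ f) :=
    (hf.fderiv_right (m := 1) (by norm_num)).differentiable one_ne_zero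
  have hsnd : ∀ i j, pd2 i (pd2 j f) q =
      fderiv ℝ (fderiv ℝ f) q (Pi.single i 1) (Pi.single j 1) := by
    intro i j
    change fderiv ℝ (fun y => fderiv ℝ f y (Pi.single j 1)) q (Pi.single i 1) = _
    rw [fderiv_clm_apply (hd q) (differentiableAt_const _)]
    simp
  rw [hsnd, hsnd, hf.contDiffAt.isSymmSndFDerivAt (by simp)]

lemma pd2_neg (i : Fin 2) : pd2 i (fun q => -f q) q = -pd2 i f q := by
  simp [pd2]

lemma Filter.EventuallyEq.pd2_eq (hfg : f =ᶠ[𝓝 q] g) (i : Fin 2) : pd2 i f q = pd2 i g q := by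
  rw [pd2, pd2, hfg.fderiv_eq]

lemma pd2_zero_one_div_mul_add_div (hq : q 0 ≠ 0) (hf : DifferentiableAt ℝ f q) :
    pd2 0 (fun q => 1 / q 0 * f q) q + 1 / q 0 * f q / q 0 = (q 0)⁻¹ * pd2 0 f q := by
  have hc : HasFDerivAt (fun q : V2 => 1 / q 0) (-(q 0 ^ 2)⁻¹ • .proj (R := ℝ) 0) q := by
    simpa only [one_div, Function.comp_def] using
      (hasDerivAt_inv hq).comp_hasFDerivAt q (hasFDerivAt_apply 0 q)
  have H : HasFDerivAt (fun q : V2 => 1 / q 0 * f q) _ q := hc.mul hf.hasFDerivAt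
  simp only [pd2, H.fderiv]
  simp only [add_apply, smul_apply, ContinuousLinearMap.proj_apply, Pi.single_eq_same,
    smul_eq_mul, one_div, mul_one]
  field_simp
  ring

lemma inv_mul_pd2_one_add_pd2_one (hq : q 0 ≠ 0) (c : ℝ) (hf : DifferentiableAt ℝ f q)
    (hg : DifferentiableAt ℝ g q) :
    (q 0)⁻¹ * (c * pd2 1 f q) + pd2 1 g q = (q 0)⁻¹ * pd2 1 (fun q => c * f q + q 0 * g q) q := by
  have H : HasFDerivAt (fun q : V2 => c * f q + q 0 * g q) _ q :=
    (hf.hasFDerivAt.const_mul c).add ((hasFDerivAt_apply 0 q).mul hg.hasFDerivAt)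
  simp only [pd2, H.fderiv]
  simp only [add_apply, smul_apply, ContinuousLinearMap.proj_apply,
    Pi.single_eq_of_ne zero_ne_one, smul_eq_mul, mul_zero, add_zero]
  field_simp

end Planar

section Profiles

variable (k : ℝ) (h : ℝ → ℝ) (t : V2 → ℝ)

def radialProfile (q : V2) : ℝ := 1 / q 0 * pd2 1 t q

def azimuthalProfile (q : V2) : ℝ := (q 0 ^ 2 + k ^ 2)⁻¹ * (q 0 * h (t q) + k * pd2 0 t q)

def axialProfile (q : V2) : ℝ := (q 0 ^ 2 + k ^ 2)⁻¹ * (k * h (t q) - q 0 * pd2 0 t q)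

variable {k h t} {q : V2}

lemma neg_mul_azimuthalProfile_add_fst_mul_axialProfile (hq : q 0 ≠ 0) :
    -k * azimuthalProfile k h t q + q 0 * axialProfile k h t q = -pd2 0 t q := by
  have : q 0 ^ 2 + k ^ 2 ≠ 0 := by positivity
  simp only [azimuthalProfile, axialProfile]
  field_simp
  ring

lemma differentiableAt_radialProfile (ht : ContDiff ℝ 2 t) (hq : q 0 ≠ 0) :
    DifferentiableAt ℝ (radialProfile t) q := by
  have := (ht.pd2 1).differentiable one_ne_zero
  unfold radialProfile
  fun_prop (disch := exact hq)

lemma differentiableAt_azimuthalProfile (ht : ContDiff ℝ 2 t) (hh : Differentiable ℝ h)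
    (hq : q 0 ≠ 0) : DifferentiableAt ℝ (azimuthalProfile k h t) q := by
  have := (ht.pd2 0).differentiable one_ne_zero
  have := ht.differentiable two_ne_zero
  unfold azimuthalProfile
  fun_prop (disch := positivity)

lemma differentiableAt_axialProfile (ht : ContDiff ℝ 2 t) (hh : Differentiable ℝ h)
    (hq : q 0 ≠ 0) : DifferentiableAt ℝ (axialProfile k h t) q := by
  have := (ht.pd2 0).differentiable one_ne_zero
  have := ht.differentiable two_ne_zero
  unfold axialProfile
  fun_prop (disch := positivity)

theorem profiles_div_eq_zero (ht : ContDiff ℝ 2 t) (hh : Differentiable ℝ h) (hq : q 0 ≠ 0) :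
    pd2 0 (radialProfile t) q + radialProfile t q / q 0
      + (q 0)⁻¹ * (-k * pd2 1 (azimuthalProfile k h t) q) + pd2 1 (axialProfile k h t) q = 0 := by
  have hcomb : (fun q : V2 => -k * azimuthalProfile k h t q + q 0 * axialProfile k h t q)
      =ᶠ[𝓝 q] fun q => -pd2 0 t q := by
    filter_upwards [(continuous_apply 0).continuousAt.eventually_ne hq] with q' hq'
    exact neg_mul_azimuthalProfile_add_fst_mul_axialProfile hq'
  have hradial : pd2 0 (radialProfile t) q + radialProfile t q / q 0 =
      (q 0)⁻¹ * pd2 0 (pd2 1 t) q :=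
    pd2_zero_one_div_mul_add_div hq (((ht.pd2 1).differentiable one_ne_zero) q)
  have haxial : (q 0)⁻¹ * (-k * pd2 1 (azimuthalProfile k h t) q) + pd2 1 (axialProfile k h t) q =
      -((q 0)⁻¹ * pd2 1 (pd2 0 t) q) := by
    rw [inv_mul_pd2_one_add_pd2_one hq _ (differentiableAt_azimuthalProfile ht hh hq)
      (differentiableAt_axialProfile ht hh hq), hcomb.pd2_eq, pd2_neg, mul_neg]
  rw [add_assoc, hradial, haxial, pd2_pd2_comm ht, add_neg_cancel]

end Profiles

/-- Coordinates on `V3`: `p 0 = ρ`, `p 1 = φ`, `p 2 = z`. -/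
theorem helical_div_free_general (k : ℝ)
    (t : V2 → ℝ) (ht : ContDiff ℝ 2 t) (h : ℝ → ℝ) (hh : ContDiff ℝ 1 h)
    (uρ uφ uz : V3 → ℝ)
    (huρ : ∀ p : V3, uρ p = (1 / p 0) * pd2 1 t ![p 0, p 2 - k * p 1])
    (huz : ∀ p : V3, uz p = ((p 0)^2 + k^2)⁻¹ *
      (k * h (t ![p 0, p 2 - k * p 1]) - p 0 * pd2 0 t ![p 0, p 2 - k * p 1]))
    (huφ : ∀ p : V3, uφ p = ((p 0)^2 + k^2)⁻¹ *
      (p 0 * h (t ![p 0, p 2 - k * p 1]) + k * pd2 0 t ![p 0, p 2 - k * p 1])) :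
    ∀ p : V3, 0 < p 0 →
      pd 0 uρ p + uρ p / p 0 + (p 0)⁻¹ * pd 1 uφ p + pd 2 uz p = 0 := by
  intro p hp
  obtain rfl : uρ = radialProfile t ∘ helicalCoord k := funext fun p => by simp [huρ, radialProfile]
  obtain rfl : uφ = azimuthalProfile k h t ∘ helicalCoord k :=
    funext fun p => by simp [huφ, azimuthalProfile]
  obtain rfl : uz = axialProfile k h t ∘ helicalCoord k :=
    funext fun p => by simp [huz, axialProfile]
  have hq : helicalCoord k p 0 ≠ 0 := by simpa using hp.ne'
  have hh' := hh.differentiable one_ne_zero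
  rw [pd_zero_comp_helicalCoord k (differentiableAt_radialProfile ht hq),
    pd_one_comp_helicalCoord k (differentiableAt_azimuthalProfile ht hh' hq),
    pd_two_comp_helicalCoord k (differentiableAt_axialProfile ht hh' hq)]
  simpa using profiles_div_eq_zero ht hh' hq

/-- The helically symmetric field with cylindrical components
`u_ρ = (1/x) t_y`, `u_z = (x²+k²)⁻¹(kh − x t_x)`, `u_φ = (x²+k²)⁻¹(xh + k t_x)`,
where `x = ρ`, `y = z − kφ`, is divergence-free:
`∂ρ u_ρ + u_ρ/ρ + ρ⁻¹ ∂φ u_φ + ∂z u_z = 0`.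
Coordinates on `V3`: `p 0 = ρ`, `p 1 = φ`, `p 2 = z`. -/
theorem helical_div_free (k : ℝ) (hk : 0 < k)
    (t : V2 → ℝ) (ht : ContDiff ℝ 2 t) (h : ℝ → ℝ) (hh : ContDiff ℝ 1 h)
    (uρ uφ uz : V3 → ℝ)
    (huρ : ∀ p : V3, uρ p = (1 / p 0) * pd2 1 t ![p 0, p 2 - k * p 1])
    (huz : ∀ p : V3, uz p = ((p 0)^2 + k^2)⁻¹ *
      (k * h (t ![p 0, p 2 - k * p 1]) - p 0 * pd2 0 t ![p 0, p 2 - k * p 1]))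
    (huφ : ∀ p : V3, uφ p = ((p 0)^2 + k^2)⁻¹ *
      (p 0 * h (t ![p 0, p 2 - k * p 1]) + k * pd2 0 t ![p 0, p 2 - k * p 1])) :
    ∀ p : V3, 0 < p 0 →
      pd 0 uρ p + uρ p / p 0 + (p 0)⁻¹ * pd 1 uφ p + pd 2 uz p = 0 :=
  helical_div_free_general k t ht h hh uρ uφ uz huρ huz huφ
end
end

section
/- In the degenerate case k = 0, the system dh²/dt = c + 36t²/(h²−3tc), dc/dt = 6t/(h²−3tc) implies, after eliminating h², the second-order ODE 6t c'' + 3t (c')³ − 2c (c')² − 6c' = 0. -/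
/-!
Put `D = h² − 3tc`, so that `c' = 6t/D`. Substituting `36t²/D = 6t c'` into `(h²)' = c + 36t²/D`
gives `D' = 3t c' − 2c`, and differentiating the quotient gives
`6t c'' = 6t (6D − 6t D')/D² = 6c' − c'² D'`, which is the claimed equation.
-/

open Filter Topology

lemma hasDerivAt_sq_sub_mul_mul {h c : ℝ → ℝ} {t : ℝ} (hh : DifferentiableAt ℝ h t)
    (hc : DifferentiableAt ℝ c t) (k : ℝ) :
    HasDerivAt (fun s => h s ^ 2 - k * s * c s)
      (deriv (fun s => h s ^ 2) t - (k * c t + k * t * deriv c t)) t := by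
  have hks : HasDerivAt (fun s : ℝ => k * s) k t := by
    simpa using (hasDerivAt_id t).const_mul k
  exact (hh.pow 2).hasDerivAt.sub (hks.mul hc.hasDerivAt)

lemma hasDerivAt_deriv_of_eventually_eq_mul_div {c D : ℝ → ℝ} {D' t : ℝ} (a : ℝ)
    (hD : HasDerivAt D D' t) (hDt : D t ≠ 0) (heq : ∀ᶠ s in 𝓝 t, deriv c s = a * s / D s) :
    HasDerivAt (deriv c) ((a * D t - a * t * D') / D t ^ 2) t := by
  have hlin : HasDerivAt (fun s : ℝ => a * s) a t := by
    simpa using (hasDerivAt_id t).const_mul a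
  exact (hlin.div hD hDt).congr_of_eventuallyEq heq

lemma degenerate_ode_of_derivatives {t c c₁ c₂ D hsq' : ℝ} (hD : D ≠ 0)
    (hc₁ : c₁ = 6 * t / D) (hsq : hsq' = c + 36 * t ^ 2 / D)
    (hc₂ : c₂ = (6 * D - 6 * t * (hsq' - (3 * c + 3 * t * c₁))) / D ^ 2) :
    6 * t * c₂ + 3 * t * c₁ ^ 3 - 2 * c * c₁ ^ 2 - 6 * c₁ = 0 := by
  subst hc₁ hsq hc₂
  field_simp
  ring

theorem degenerate_second_order_ode_general (I : Set ℝ) (hI : IsOpen I)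
    (h c : ℝ → ℝ) (hh : ContDiffOn ℝ 2 h I) (hc : ContDiffOn ℝ 2 c I)
    (hden : ∀ t ∈ I, h t ^ 2 - 3 * t * c t ≠ 0)
    (heq1 : ∀ t ∈ I, deriv (fun s => h s ^ 2) t
      = c t + 36 * t^2 / (h t ^ 2 - 3 * t * c t))
    (heq2 : ∀ t ∈ I, deriv c t = 6 * t / (h t ^ 2 - 3 * t * c t)) :
    ∀ t ∈ I, 6 * t * deriv (deriv c) t + 3 * t * (deriv c t)^3
      - 2 * c t * (deriv c t)^2 - 6 * deriv c t = 0 := by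
  intro t ht
  have hI_nhds : I ∈ 𝓝 t := hI.mem_nhds ht
  have hD := hasDerivAt_sq_sub_mul_mul
    ((hh.contDiffAt hI_nhds).differentiableAt two_ne_zero)
    ((hc.contDiffAt hI_nhds).differentiableAt two_ne_zero) 3
  have hc₂ := hasDerivAt_deriv_of_eventually_eq_mul_div 6 hD (hden t ht)
    (eventually_of_mem hI_nhds heq2)
  exact degenerate_ode_of_derivatives (hden t ht) (heq2 t ht) (heq1 t ht) hc₂.deriv

/-- In the degenerate case `k = 0`, eliminating `h²` from the system
`(h²)' = c + 36t²/(h²−3tc)`, `c' = 6t/(h²−3tc)` yields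
`6t c'' + 3t (c')³ − 2c (c')² − 6c' = 0`. -/
theorem degenerate_second_order_ode (I : Set ℝ) (hI : IsOpen I)
    (h c : ℝ → ℝ) (hh : ContDiffOn ℝ 2 h I) (hc : ContDiffOn ℝ 2 c I)
    (hden : ∀ t ∈ I, h t ^ 2 - 3 * t * c t ≠ 0)
    (hc' : ∀ t ∈ I, deriv c t ≠ 0)
    (heq1 : ∀ t ∈ I, deriv (fun s => h s ^ 2) t
      = c t + 36 * t^2 / (h t ^ 2 - 3 * t * c t))
    (heq2 : ∀ t ∈ I, deriv c t = 6 * t / (h t ^ 2 - 3 * t * c t)) :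
    ∀ t ∈ I, 6 * t * deriv (deriv c) t + 3 * t * (deriv c t)^3
      - 2 * c t * (deriv c t)^2 - 6 * deriv c t = 0 :=
  degenerate_second_order_ode_general I hI h c hh hc hden heq1 heq2
end
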